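/- Let H ⊆ {2,3,...} and define M(H) as the supremum of λ over all nonnegative trigonometric polynomials φ(t) = 1 + λ cos(2πt) + ∑_{k∈H} c_k cos(2πkt) (finite sums, k ∈ H). Then M(H) · M({2,3,...} \ H) = 2. -/

import Mathlib

open Real

/-- `turanM H` is the supremum of `λ` over all nonnegative trigonometric polynomials
`φ(t) = 1 + λ cos(2πt) + ∑_{k ∈ S} c_k cos(2πkt)` with `S` a finite subset of `H`. -/
noncomputable def turanM (H : Set ℕ) : ℝ :=
  sSup {lam : ℝ | ∃ S : Finset ℕ, ↑S ⊆ H ∧ ∃ c : ℕ → ℝ,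
    ∀ t : ℝ, 0 ≤ 1 + lam * Real.cos (2 * π * t) +
      ∑ k ∈ S, c k * Real.cos (2 * π * k * t)}

/-!
If `φ ∈ Φ(H)` has coefficient `λ` and `ψ ∈ Φ(Hᶜ)` has coefficient `μ`, then `ψ(t + 1/2)` has
coefficient `-μ`, and it shares no frequency with `φ` besides `0` and `1`; by orthogonality `0 ≤
∫₀¹ φ(t) ψ(t + 1/2) dt = 1 - λμ/2`.

Conversely, let `λ > 0` be the coefficient of no element of `Φ(H)`. In the space of coefficient
vectors, the cone of nonnegative cosine polynomials of degree `< n` has the constant `1` as an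
interior point and misses the affine space of vectors `(1, λ, …)` that are free on `H` and zero
off `H`. Hahn–Banach gives a functional `τ ≥ 0` on the cone that vanishes on the frequencies in
`H`, with `τ₀ + λτ₁ ≤ 0`. Pairing `τ` with the nonnegative kernels `x ↦ (F_n(x - θ) + F_n(x + θ))
/ 2`, `F_n` the Fejér kernel, yields the nonnegative polynomial `θ ↦ ∑ w_k τ_k cos(2πkθ)` (`w_k`
the Fejér weights) with frequencies in `{0, 1} ∪ Hᶜ`; after the shift `θ ↦ θ + 1/2` and
normalisation it lies in `Φ(Hᶜ)` with coefficient at least `w₁ / λ`, and `w₁ = 2 - 2/n → 2`, so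
`M(Hᶜ) ≥ 2/λ` for every `λ > M(H)`.
-/

open Finset

noncomputable def cosPoly (S : Finset ℕ) (a : ℕ → ℝ) (t : ℝ) : ℝ :=
  ∑ k ∈ S, a k * cos (2 * π * k * t)

section CosPoly

variable {S : Finset ℕ} {a b : ℕ → ℝ}

lemma cosPoly_add (t : ℝ) : cosPoly S (a + b) t = cosPoly S a t + cosPoly S b t := by
  simp only [cosPoly, Pi.add_apply, add_mul, sum_add_distrib]

lemma cosPoly_smul (c t : ℝ) : cosPoly S (c • a) t = c * cosPoly S a t := by
  simp only [cosPoly, Pi.smul_apply, smul_eq_mul, mul_sum, mul_assoc]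

lemma cosPoly_add_half (t : ℝ) :
    cosPoly S a (t + 1 / 2) = cosPoly S (fun k => (-1) ^ k * a k) t := by
  refine sum_congr rfl fun k _ => ?_
  rw [show 2 * π * k * (t + 1 / 2) = 2 * π * k * t + k * π by ring, cos_add_nat_mul_pi]
  ring

lemma abs_cosPoly_le (t : ℝ) : |cosPoly S a t| ≤ ∑ k ∈ S, |a k| :=
  (abs_sum_le_sum_abs _ _).trans <| sum_le_sum fun k _ => by
    rw [abs_mul]
    exact mul_le_of_le_one_right (abs_nonneg _) (abs_cos_le_one _)

lemma cosPoly_sum_pi_single (c : ℕ → ℝ) (t : ℝ) :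
    cosPoly S (∑ k ∈ S, Pi.single k (c k)) t = cosPoly S c t :=
  sum_congr rfl fun k hk => by rw [Finset.sum_apply, sum_pi_single, if_pos hk]

lemma cosPoly_range_eq {n : ℕ} (hn : 2 ≤ n) (a : ℕ → ℝ) (t : ℝ) :
    cosPoly (range n) a t =
      a 0 + a 1 * cos (2 * π * t) + cosPoly ((range n).filter (2 ≤ ·)) a t := by
  have hsmall : (range n).filter (fun k => ¬2 ≤ k) = {0, 1} := by
    ext k
    simp only [mem_filter, mem_range, mem_insert, mem_singleton]
    omega
  rw [cosPoly, ← sum_filter_not_add_sum_filter _ (2 ≤ ·), hsmall, sum_pair zero_ne_one]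
  simp [cosPoly]

end CosPoly

lemma integral_cos_two_pi_int_mul (j : ℤ) :
    ∫ t in (0 : ℝ)..1, cos (2 * π * j * t) = if j = 0 then 1 else 0 := by
  split_ifs with hj
  · simp [hj]
  · have hc : 2 * π * j ≠ 0 := by positivity
    rw [intervalIntegral.integral_comp_mul_left cos hc, integral_cos,
      show 2 * π * j * 1 = ((2 * j : ℤ) : ℝ) * π by push_cast; ring, sin_int_mul_pi]
    simp

lemma integral_cos_mul_cos_nat (k m : ℕ) :
    ∫ t in (0 : ℝ)..1, cos (2 * π * k * t) * cos (2 * π * m * t) =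
      if k = m then (if k = 0 then 1 else 1 / 2) else 0 := by
  have hprod : ∀ t : ℝ, cos (2 * π * k * t) * cos (2 * π * m * t) =
      (cos (2 * π * ((k - m : ℤ) : ℝ) * t) + cos (2 * π * ((k + m : ℤ) : ℝ) * t)) / 2 := by
    intro t
    push_cast
    rw [show 2 * π * (k - m) * t = 2 * π * k * t - 2 * π * m * t by ring,
      show 2 * π * (k + m) * t = 2 * π * k * t + 2 * π * m * t by ring, cos_sub, cos_add]
    ring
  simp_rw [hprod]
  rw [intervalIntegral.integral_div,
    intervalIntegral.integral_add (by apply Continuous.intervalIntegrable; fun_prop)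
      (by apply Continuous.intervalIntegrable; fun_prop),
    integral_cos_two_pi_int_mul, integral_cos_two_pi_int_mul]
  split_ifs <;> first | (exfalso; omega) | norm_num

lemma integral_cosPoly_mul_cosPoly (S T : Finset ℕ) (a b : ℕ → ℝ) :
    ∫ t in (0 : ℝ)..1, cosPoly S a t * cosPoly T b t =
      ∑ k ∈ S ∩ T, a k * b k * (if k = 0 then 1 else 1 / 2) := by
  have hint : ∀ k m : ℕ, IntervalIntegrable
      (fun t => a k * b m * (cos (2 * π * k * t) * cos (2 * π * m * t))) MeasureTheory.volume 0 1 :=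
    fun k m => by apply Continuous.intervalIntegrable; fun_prop
  simp_rw [cosPoly, sum_mul_sum, show ∀ k m t, a k * cos (2 * π * k * t) * (b m * cos (2 * π * m * t))
    = a k * b m * (cos (2 * π * k * t) * cos (2 * π * m * t)) from fun _ _ _ => by ring]
  rw [intervalIntegral.integral_finsetSum fun k _ => by apply Continuous.intervalIntegrable; fun_prop]
  simp_rw [intervalIntegral.integral_finsetSum fun m _ => hint _ m,
    intervalIntegral.integral_const_mul, integral_cos_mul_cos_nat, mul_ite, mul_zero,
    sum_ite_eq, ← sum_ite_mem]

noncomputable def turanPoly (lam : ℝ) (S : Finset ℕ) (c : ℕ → ℝ) (t : ℝ) : ℝ :=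
  1 + lam * cos (2 * π * t) + cosPoly S c t

def turanSet (H : Set ℕ) : Set ℝ :=
  {lam | ∃ S : Finset ℕ, ↑S ⊆ H ∧ ∃ c : ℕ → ℝ, ∀ t, 0 ≤ turanPoly lam S c t}

lemma turanM_eq_sSup (H : Set ℕ) : turanM H = sSup (turanSet H) := rfl

lemma one_mem_turanSet (H : Set ℕ) : (1 : ℝ) ∈ turanSet H :=
  ⟨∅, by simp, 0, fun t => by
    simp only [turanPoly, cosPoly, sum_empty, one_mul, add_zero]
    linarith [neg_one_le_cos (2 * π * t)]⟩

lemma turanPoly_add_half (lam : ℝ) (S : Finset ℕ) (c : ℕ → ℝ) (t : ℝ) :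
    turanPoly lam S c (t + 1 / 2) = turanPoly (-lam) S (fun k => (-1) ^ k * c k) t := by
  rw [turanPoly, turanPoly, cosPoly_add_half, show 2 * π * (t + 1 / 2) = 2 * π * t + π by ring,
    cos_add_pi]
  ring

lemma neg_mem_turanSet {H : Set ℕ} {lam : ℝ} (h : lam ∈ turanSet H) : -lam ∈ turanSet H := by
  obtain ⟨S, hS, c, hc⟩ := h
  exact ⟨S, hS, _, fun t => turanPoly_add_half lam S c t ▸ hc (t + 1 / 2)⟩

lemma cosPoly_insert_zero_one {S : Finset ℕ} (hS : ∀ k ∈ S, 2 ≤ k) (lam : ℝ) (c : ℕ → ℝ)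
    (t : ℝ) : cosPoly (insert 0 (insert 1 S)) (Function.update (Function.update c 0 1) 1 lam) t =
      turanPoly lam S c t := by
  have h0 : 0 ∉ insert 1 S := by simpa using fun h => by simpa using hS 0 h
  have h1 : 1 ∉ S := fun h => by simpa using hS 1 h
  rw [cosPoly, sum_insert h0, sum_insert h1, turanPoly, add_assoc]
  congr 1
  · simp
  · congr 1
    · simp
    · refine sum_congr rfl fun k hk => ?_
      have := hS k hk
      rw [Function.update_of_ne (by omega), Function.update_of_ne (by omega)]

lemma integral_turanPoly_mul_turanPoly {S T : Finset ℕ} (hS : ∀ k ∈ S, 2 ≤ k)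
    (hT : ∀ k ∈ T, 2 ≤ k) (hST : Disjoint S T) (lam mu : ℝ) (c d : ℕ → ℝ) :
    ∫ t in (0 : ℝ)..1, turanPoly lam S c t * turanPoly mu T d t = 1 + lam * mu / 2 := by
  simp_rw [← cosPoly_insert_zero_one hS, ← cosPoly_insert_zero_one hT]
  have hinter : insert 0 (insert 1 S) ∩ insert 0 (insert 1 T) = {0, 1} := by
    ext k
    have : k ∈ S → k ∉ T := fun h => disjoint_left.mp hST h
    have := hS k
    have := hT k
    simp only [mem_inter, mem_insert, mem_singleton]
    grind
  rw [integral_cosPoly_mul_cosPoly, hinter, sum_pair zero_ne_one]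
  simp only [ne_eq, zero_ne_one, not_false_eq_true, Function.update_of_ne, Function.update_self,
    mul_one, ↓reduceIte, one_ne_zero]
  ring

lemma mul_le_two_of_mem_turanSet {H H' : Set ℕ} (hH : H ⊆ {k | 2 ≤ k})
    (hH' : H' ⊆ {k | 2 ≤ k}) (hHH' : Disjoint H H') {lam mu : ℝ} (hlam : lam ∈ turanSet H)
    (hmu : mu ∈ turanSet H') : lam * mu ≤ 2 := by
  obtain ⟨S, hSH, c, hc⟩ := hlam
  obtain ⟨T, hTH', d, hd⟩ := neg_mem_turanSet hmu
  have hint := integral_turanPoly_mul_turanPoly (fun k hk => hH (hSH hk))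
    (fun k hk => hH' (hTH' hk)) (by simpa [← disjoint_coe] using hHH'.mono hSH hTH') lam (-mu) c d
  have hnonneg : 0 ≤ ∫ t in (0 : ℝ)..1, turanPoly lam S c t * turanPoly (-mu) T d t :=
    intervalIntegral.integral_nonneg zero_le_one fun t _ => mul_nonneg (hc t) (hd t)
  linarith

lemma bddAbove_turanSet {H : Set ℕ} (hH : H ⊆ {k | 2 ≤ k}) : BddAbove (turanSet H) :=
  ⟨2, fun mu hmu => by
    simpa using mul_le_two_of_mem_turanSet (Set.empty_subset _) hH (Set.empty_disjoint H)
      (one_mem_turanSet ∅) hmu⟩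

lemma sq_sum_cos_add_sq_sum_sin (n : ℕ) (y : ℝ) :
    (∑ j ∈ range n, cos (j * y)) ^ 2 + (∑ j ∈ range n, sin (j * y)) ^ 2 =
      2 * ∑ k ∈ range n, (n - k) * cos (k * y) - n := by
  induction n with
  | zero => simp
  | succ n ih =>
    have hcross : (∑ j ∈ range n, cos (j * y)) * cos (n * y) +
        (∑ j ∈ range n, sin (j * y)) * sin (n * y) = ∑ k ∈ range n, cos ((k + 1) * y) := by
      rw [sum_mul, sum_mul, ← sum_add_distrib,
        ← sum_range_reflect (fun k : ℕ => cos ((k + 1) * y))]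
      refine sum_congr rfl fun j hj => ?_
      have hj : j < n := mem_range.mp hj
      rw [show ((n - 1 - j : ℕ) : ℝ) + 1 = n - j by
        rw [Nat.cast_sub (by omega), Nat.cast_sub (by omega)]; push_cast; ring, sub_mul, cos_sub]
      ring
    have hshift : ∑ k ∈ range n, cos ((k + 1) * y) + 1 =
        ∑ k ∈ range n, cos (k * y) + cos (n * y) := by
      simpa using (sum_range_succ' (fun k : ℕ => cos (k * y)) n).symm.trans (sum_range_succ _ n)
    have hsplit : ∑ k ∈ range n, ((n + 1 : ℕ) - k : ℝ) * cos (k * y) =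
        ∑ k ∈ range n, (n - k : ℝ) * cos (k * y) + ∑ k ∈ range n, cos (k * y) := by
      rw [← sum_add_distrib]
      exact sum_congr rfl fun k _ => by push_cast; ring
    rw [sum_range_succ, sum_range_succ, sum_range_succ, hsplit]
    push_cast
    linear_combination ih + 2 * hcross + sin_sq_add_cos_sq (n * y) + 2 * hshift

/-- Coefficients of the Fejér kernel `F_n(y) = ∑_{|k| < n} (1 - |k|/n) e^{iky}`. -/
noncomputable def fejerWeight (n k : ℕ) : ℝ := if k = 0 then 1 else 2 * (1 - k / n)

@[simp]
lemma fejerWeight_zero (n : ℕ) : fejerWeight n 0 = 1 := if_pos rfl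

lemma fejerWeight_nonneg {n k : ℕ} (hk : k ≤ n) : 0 ≤ fejerWeight n k := by
  unfold fejerWeight
  split_ifs
  · exact zero_le_one
  · have : (k : ℝ) / n ≤ 1 := div_le_one_of_le₀ (by exact_mod_cast hk) n.cast_nonneg
    linarith

lemma tendsto_fejerWeight_one :
    Filter.Tendsto (fun n => fejerWeight n 1) Filter.atTop (nhds 2) := by
  simpa [fejerWeight] using (tendsto_one_div_atTop_nhds_zero_nat.const_sub 1).const_mul (2 : ℝ)

lemma sum_fejerWeight_mul_cos_nonneg {n : ℕ} (hn : 0 < n) (y : ℝ) :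
    0 ≤ ∑ k ∈ range n, fejerWeight n k * cos (k * y) := by
  have hn' : (0 : ℝ) < n := by exact_mod_cast hn
  have hterm : ∀ k, n * (fejerWeight n k * cos (k * y)) =
      2 * ((n - k) * cos (k * y)) - if k = 0 then (n : ℝ) else 0 := by
    intro k
    unfold fejerWeight
    split_ifs with hk
    · simp only [hk, CharP.cast_eq_zero, zero_mul, cos_zero, mul_one, sub_zero]
      ring
    · field_simp
      ring
  have hsq : n * ∑ k ∈ range n, fejerWeight n k * cos (k * y) =
      (∑ j ∈ range n, cos (j * y)) ^ 2 + (∑ j ∈ range n, sin (j * y)) ^ 2 := by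
    rw [sq_sum_cos_add_sq_sum_sin, mul_sum, sum_congr rfl fun k _ => hterm k, sum_sub_distrib,
      ← mul_sum, sum_ite_eq' _ _ (fun _ => (n : ℝ)), if_pos (mem_range.mpr hn)]
  exact nonneg_of_mul_nonneg_right (hsq ▸ by positivity) hn'

lemma sum_fejerWeight_mul_cos_mul_cos_nonneg {n : ℕ} (hn : 0 < n) (θ x : ℝ) :
    0 ≤ ∑ k ∈ range n, fejerWeight n k * cos (2 * π * k * θ) * cos (2 * π * k * x) := by
  have h := add_nonneg (sum_fejerWeight_mul_cos_nonneg hn (2 * π * (x - θ)))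
    (sum_fejerWeight_mul_cos_nonneg hn (2 * π * (x + θ)))
  have hterm : ∀ k : ℕ, fejerWeight n k * cos (k * (2 * π * (x - θ))) +
      fejerWeight n k * cos (k * (2 * π * (x + θ))) =
      2 * (fejerWeight n k * cos (2 * π * k * θ) * cos (2 * π * k * x)) := by
    intro k
    rw [show k * (2 * π * (x - θ)) = 2 * π * k * x - 2 * π * k * θ by ring,
      show k * (2 * π * (x + θ)) = 2 * π * k * x + 2 * π * k * θ by ring, cos_sub, cos_add]
    ring
  rw [← sum_add_distrib, sum_congr rfl fun k _ => hterm k, ← mul_sum] at h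
  linarith

lemma nonpos_of_forall_nonneg_mul_le {x s : ℝ} (h : ∀ t : ℝ, 0 ≤ t → t * x ≤ s) : x ≤ 0 := by
  by_contra! hx
  have := h ((|s| + 1) / x) (by positivity)
  rw [div_mul_cancel₀ _ hx.ne'] at this
  linarith [le_abs_self s]

lemma eq_zero_of_forall_le_add_mul {x s d : ℝ} (h : ∀ t : ℝ, s ≤ d + t * x) : x = 0 := by
  by_contra hx
  have := h ((s - d - 1) / x)
  rw [div_mul_cancel₀ _ hx] at this
  linarith

/-- The interior point `x₀` is what allows separating `K` from `b + W` although `K + W` need not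
be closed. -/
theorem PointedCone.exists_dual_of_forall_add_notMem {E : Type*} [AddCommGroup E] [Module ℝ E]
    [TopologicalSpace E] [IsTopologicalAddGroup E] [ContinuousSMul ℝ E]
    {K : PointedCone ℝ E} {x₀ : E} (hx₀ : x₀ ∈ interior (K : Set E)) {W : Submodule ℝ E} {b : E}
    (hb : ∀ w ∈ W, b + w ∉ K) :
    ∃ g : StrongDual ℝ E, (∀ a ∈ K, 0 ≤ g a) ∧ (∀ w ∈ W, g w = 0) ∧ g b ≤ 0 ∧ g b < g x₀ := by
  have hB : Convex ℝ ((b + ·) '' (W : Set E)) := W.convex.translate b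
  have hdisj : Disjoint (interior (K : Set E)) ((b + ·) '' (W : Set E)) := by
    rw [Set.disjoint_right]
    rintro _ ⟨w, hw, rfl⟩ hmem
    exact hb w hw (interior_subset hmem)
  obtain ⟨f, s, hfK, hfB⟩ := geometric_hahn_banach_open K.convex.interior isOpen_interior hB hdisj
  have hfK_le : ∀ a ∈ K, f a ≤ s := by
    intro a ha
    refine closure_minimal (fun x hx => (hfK x hx).le) (isClosed_le f.continuous continuous_const) ?_
    rw [K.convex.closure_interior_eq_closure_of_nonempty_interior ⟨x₀, hx₀⟩]
    exact subset_closure ha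
  have hfK_nonpos : ∀ a ∈ K, f a ≤ 0 := fun a ha =>
    nonpos_of_forall_nonneg_mul_le fun t ht => by simpa using hfK_le (t • a) (K.smul_mem ht ha)
  have hs : 0 ≤ s := by simpa using hfK_le 0 K.zero_mem
  have hfW : ∀ w ∈ W, f w = 0 := fun w hw =>
    eq_zero_of_forall_le_add_mul fun t => by
      simpa using hfB (b + t • w) ⟨t • w, W.smul_mem t hw, rfl⟩
  have hfb : s ≤ f b := by simpa using hfB b ⟨0, W.zero_mem, add_zero b⟩
  exact ⟨-f, fun a ha => by simpa using hfK_nonpos a ha, fun w hw => by simp [hfW w hw],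
    by simpa using hs.trans hfb, by simpa using (hfK x₀ hx₀).trans_le hfb⟩

section PiSingle

variable {ι R M F : Type*} [DecidableEq ι] [Semiring R] [AddCommMonoid M] [Module R M]
  [FunLike F (ι → R) M] [LinearMapClass F R (ι → R) M] (g : F)

lemma map_pi_single (k : ι) (r : R) : g (Pi.single k r) = r • g (Pi.single k 1) := by
  rw [← map_smul, ← Pi.single_smul', smul_eq_mul, mul_one]

lemma map_sum_pi_single (S : Finset ι) (c : ι → R) :
    g (∑ k ∈ S, Pi.single k (c k)) = ∑ k ∈ S, c k • g (Pi.single k 1) := by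
  rw [map_sum]
  exact sum_congr rfl fun k _ => map_pi_single g k (c k)

end PiSingle

def nonnegCosPolyCone (S : Finset ℕ) : PointedCone ℝ (ℕ → ℝ) where
  carrier := {a | ∀ x, 0 ≤ cosPoly S a x}
  add_mem' ha hb x := by
    rw [cosPoly_add]
    exact add_nonneg (ha x) (hb x)
  zero_mem' x := by simp [cosPoly]
  smul_mem' c a ha x := by
    rw [Nonneg.mk_smul, cosPoly_smul]
    exact mul_nonneg c.2 (ha x)

lemma single_zero_mem_interior_nonnegCosPolyCone {S : Finset ℕ} (hS : 0 ∈ S) :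
    Pi.single 0 1 ∈ interior (nonnegCosPolyCone S : Set (ℕ → ℝ)) := by
  set e : ℕ → ℝ := Pi.single 0 1
  have hopen : IsOpen {a : ℕ → ℝ | ∑ k ∈ S, |(a - e) k| < 1} :=
    isOpen_lt (continuous_finsetSum _ fun k _ => by fun_prop) continuous_const
  refine interior_maximal (fun a ha x => ?_) hopen (by simp)
  have he : cosPoly S e x = 1 := by simp [e, cosPoly, Pi.single_apply, hS]
  have := (abs_le.mp ((abs_cosPoly_le x).trans_lt ha).le).1
  rw [show a = e + (a - e) by abel, cosPoly_add, he]
  linarith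

lemma div_mem_turanSet {H : Set ℕ} {n : ℕ} (hn : 2 ≤ n) {a : ℕ → ℝ} (ha0 : 0 < a 0)
    (ha : ∀ k, 2 ≤ k → k ∉ H → a k = 0) (haK : a ∈ nonnegCosPolyCone (range n)) :
    a 1 / a 0 ∈ turanSet H := by
  classical
  set S := ((range n).filter (2 ≤ ·)).filter (· ∈ H)
  have hS : ∀ t, cosPoly ((range n).filter (2 ≤ ·)) a t = cosPoly S a t := fun t =>
    (sum_filter_of_ne fun k hk hne => by_contra fun hkH =>
      hne (by rw [ha k (mem_filter.mp hk).2 hkH, zero_mul])).symm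
  refine ⟨S, fun k hk => (mem_filter.mp hk).2, fun k => a k / a 0, fun t => ?_⟩
  have h := haK t
  rw [cosPoly_range_eq hn, hS] at h
  have hdiv : turanPoly (a 1 / a 0) S (fun k => a k / a 0) t =
      (a 0 + a 1 * cos (2 * π * t) + cosPoly S a t) / a 0 := by
    simp only [turanPoly, cosPoly, div_mul_eq_mul_div, ← sum_div]
    field_simp
  rw [hdiv]
  positivity

lemma exists_dual_of_notMem_turanSet {H : Set ℕ} (hH : H ⊆ {k | 2 ≤ k}) {lam : ℝ}
    (hlam0 : 0 < lam) (hlam : lam ∉ turanSet H) {n : ℕ} (hn : 2 ≤ n) :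
    ∃ g : StrongDual ℝ (ℕ → ℝ), (∀ a ∈ nonnegCosPolyCone (range n), 0 ≤ g a) ∧
      (∀ k ∈ H, g (Pi.single k 1) = 0) ∧ 0 < g (Pi.single 0 1) ∧
      g (Pi.single 0 1) + lam * g (Pi.single 1 1) ≤ 0 := by
  set W : Submodule ℝ (ℕ → ℝ) := Submodule.pi Hᶜ fun _ => ⊥
  have hW : ∀ w ∈ W, ∀ k ∉ H, w k = 0 := fun w hw k hk => by simpa using hw k hk
  have h0 : 0 ∉ H := fun h => by simpa using hH h
  have h1 : 1 ∉ H := fun h => by simpa using hH h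
  have hb : ∀ w ∈ W, Pi.single 0 1 + Pi.single 1 lam + w ∉ nonnegCosPolyCone (range n) := by
    intro w hw hwK
    apply hlam
    simpa [hW w hw 0 h0, hW w hw 1 h1] using div_mem_turanSet hn (by simp [hW w hw 0 h0])
      (fun k hk hkH => by simp [hW w hw k hkH, show k ≠ 0 by omega, show k ≠ 1 by omega]) hwK
  obtain ⟨g, hgK, hgW, hgb, hgb0⟩ := PointedCone.exists_dual_of_forall_add_notMem
    (single_zero_mem_interior_nonnegCosPolyCone (mem_range.mpr (by omega))) hb
  rw [map_add, map_pi_single g 1 lam, smul_eq_mul] at hgb hgb0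
  have hg1 : g (Pi.single 1 1) < 0 := by nlinarith
  have he : Pi.single 0 1 + Pi.single 1 1 ∈ nonnegCosPolyCone (range n) := fun x => by
    rw [cosPoly_range_eq hn, cosPoly, sum_eq_zero fun k hk => ?_]
    · simp only [Pi.add_apply, Pi.single_eq_same, ne_eq, one_ne_zero, not_false_eq_true,
        Pi.single_eq_of_ne, zero_ne_one]
      linarith [neg_one_le_cos (2 * π * x)]
    · have := (mem_filter.mp hk).2
      simp [show k ≠ 0 by omega, show k ≠ 1 by omega]
  have hge := hgK _ he
  rw [map_add] at hge
  refine ⟨g, hgK, fun k hk => hgW _ fun i hi => ?_, by linarith, hgb⟩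
  simp [show i ≠ k from fun h => hi (h ▸ hk)]

lemma exists_mem_turanSet_compl_ge {H : Set ℕ} (hH : H ⊆ {k | 2 ≤ k}) {lam : ℝ}
    (hlam0 : 0 < lam) (hlam : lam ∉ turanSet H) {n : ℕ} (hn : 2 ≤ n) :
    ∃ mu ∈ turanSet ({k | 2 ≤ k} \ H), fejerWeight n 1 / lam ≤ mu := by
  obtain ⟨g, hgK, hgH, hg0, hgb⟩ := exists_dual_of_notMem_turanSet hH hlam0 hlam hn
  set τ : ℕ → ℝ := fun k => g (Pi.single k 1)
  set a : ℕ → ℝ := fun k => fejerWeight n k * τ k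
  have haK : a ∈ nonnegCosPolyCone (range n) := fun θ => by
    have hv : ∑ k ∈ range n, Pi.single k (fejerWeight n k * cos (2 * π * k * θ)) ∈
        nonnegCosPolyCone (range n) := fun x => by
      rw [cosPoly_sum_pi_single]
      exact sum_fejerWeight_mul_cos_mul_cos_nonneg (by omega) θ x
    have := hgK _ hv
    rw [map_sum_pi_single] at this
    convert this using 1
    exact sum_congr rfl fun k _ => by simp only [a, smul_eq_mul, τ]; ring
  have hmem := neg_mem_turanSet (div_mem_turanSet (H := {k | 2 ≤ k} \ H) hn
    (by simpa [a] using hg0) (fun k hk hkH => by simp [a, τ, hgH k (by simp_all)]) haK)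
  refine ⟨_, hmem, ?_⟩
  have hratio : 1 ≤ -τ 1 * lam / τ 0 := by rw [le_div_iff₀ hg0]; linarith
  rw [div_le_iff₀ hlam0, show -(a 1 / a 0) * lam = fejerWeight n 1 * (-τ 1 * lam / τ 0) by
    simp only [a, fejerWeight_zero]; field_simp]
  exact le_mul_of_one_le_right (fejerWeight_nonneg (by omega)) hratio

lemma two_div_le_sSup_turanSet_compl {H : Set ℕ} (hH : H ⊆ {k | 2 ≤ k}) {lam : ℝ}
    (hlam0 : 0 < lam) (hlam : lam ∉ turanSet H) :
    2 / lam ≤ sSup (turanSet ({k | 2 ≤ k} \ H)) := by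
  refine le_of_tendsto (tendsto_fejerWeight_one.div_const lam)
    (Filter.eventually_atTop.mpr ⟨2, fun n hn => ?_⟩)
  obtain ⟨mu, hmu, hle⟩ := exists_mem_turanSet_compl_ge hH hlam0 hlam hn
  exact hle.trans (le_csSup (bddAbove_turanSet Set.sdiff_subset) hmu)

lemma sSup_mul_sSup_eq {A B : Set ℝ} {c : ℝ} (hA : 1 ∈ A) (hB : 1 ∈ B)
    (hle : ∀ a ∈ A, ∀ b ∈ B, a * b ≤ c) (hge : ∀ a, 0 < a → a ∉ A → c / a ≤ sSup B) :
    sSup A * sSup B = c := by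
  have hbddA : BddAbove A := ⟨c, fun a ha => by simpa using hle a ha 1 hB⟩
  have hbddB : BddAbove B := ⟨c, fun b hb => by simpa using hle 1 hA b hb⟩
  have hA1 : 1 ≤ sSup A := le_csSup hbddA hA
  have hB1 : 1 ≤ sSup B := le_csSup hbddB hB
  have hc : 1 ≤ c := by simpa using hle 1 hA 1 hB
  have hupper : sSup A ≤ c / sSup B := by
    refine csSup_le ⟨1, hA⟩ fun a ha => (le_div_iff₀ (by linarith)).mpr ?_
    rcases le_or_gt a 0 with ha0 | ha0
    · nlinarith
    · rw [mul_comm, ← le_div_iff₀ ha0]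
      exact csSup_le ⟨1, hB⟩ fun b hb => (le_div_iff₀ ha0).mpr (by linarith [hle a ha b hb])
  have hlower : c / sSup B ≤ sSup A := le_of_forall_gt_imp_ge_of_dense fun a ha => by
    have ha0 : 0 < a := by linarith
    exact (div_le_comm₀ ha0 (by linarith)).mp (hge a ha0 fun h => (le_csSup hbddA h).not_gt ha)
  rw [le_div_iff₀ (by linarith)] at hupper
  rw [div_le_iff₀ (by linarith)] at hlower
  linarith

/-- Duality: `M(H) · M(ℕ≥2 \ H) = 2` for any `H ⊆ {2,3,…}`. -/
theorem turanM_duality (H : Set ℕ) (hH : H ⊆ {k : ℕ | 2 ≤ k}) :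
    turanM H * turanM ({k : ℕ | 2 ≤ k} \ H) = 2 := by
  rw [turanM_eq_sSup, turanM_eq_sSup]
  exact sSup_mul_sSup_eq (one_mem_turanSet _) (one_mem_turanSet _)
    (fun lam hlam mu hmu =>
      mul_le_two_of_mem_turanSet hH Set.sdiff_subset Set.disjoint_sdiff_right hlam hmu)
    (fun lam hlam0 hlam => two_div_le_sSup_turanSet_compl hH hlam0 hlam)
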